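/- Let 0 < r1 ≤ r2 ≤ r3, let n be an integer with 2 ≤ n ≤ 4, and let Ω be an isoperimetric region in T^3 × R^n. If η_m = 0, then I_{S^1_{r1}×S^1_{r2}×R^{n+1}}(V^{n+3}(Ω)) ≤ V^{n+2}(∂Ω). -/

import Mathlib

open MeasureTheory Real ENNReal NNReal

noncomputable section

/-- The flat circle of radius `r` (circumference `2πr`), i.e. `ℝ / (2πr)ℤ`
with the quotient (arc-length) metric. -/
abbrev Circ (r : ℝ) : Type := AddCircle (2 * Real.pi * r)

/-- `d`-dimensional Hausdorff (Riemannian) measure of a subset of a metric space. -/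
noncomputable def haus (X : Type*) [EMetricSpace X] (d : ℕ) (s : Set X) : ℝ≥0∞ :=
  letI : MeasurableSpace X := borel X
  haveI : BorelSpace X := ⟨rfl⟩
  (MeasureTheory.Measure.hausdorffMeasure (d : ℝ) : Measure X) s

/-- A closed region is the closure of an open set. -/
def IsClosedRegion {X : Type*} [TopologicalSpace X] (U : Set X) : Prop :=
  ∃ V : Set X, IsOpen V ∧ U = closure V

/-- The isoperimetric profile of an `m`-dimensional space `X`:
the infimum of the `(m-1)`-dimensional boundary measures of closed regions
of `m`-dimensional measure `v`. -/
noncomputable def isoProfile (X : Type*) [EMetricSpace X] (m : ℕ) (v : ℝ≥0∞) : ℝ≥0∞ :=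
  ⨅ (U : Set X) (_ : IsClosedRegion U ∧ haus X m U = v), haus X (m - 1) (frontier U)

/-- An isoperimetric region in the `m`-dimensional space `X`. -/
def IsIsoRegion (X : Type*) [EMetricSpace X] (m : ℕ) (Ω : Set X) : Prop :=
  IsClosedRegion Ω ∧ haus X (m - 1) (frontier Ω) = isoProfile X m (haus X m Ω)

/-- Euclidean `n`-space. -/
abbrev EucSp (n : ℕ) : Type := EuclideanSpace ℝ (Fin n)

/-- The Riemannian product `S¹_r × ℝ^m` (with the `ℓ²` product metric). -/
abbrev S1R (r : ℝ) (m : ℕ) : Type := WithLp 2 (Circ r × EucSp m)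

/-- The Riemannian product `S¹_{r1} × S¹_{r2} × ℝ^n = T² × ℝ^n`. -/
abbrev T2R (r1 r2 : ℝ) (n : ℕ) : Type := WithLp 2 (Circ r1 × S1R r2 n)

/-- first circle coordinate of a point of `T² × ℝ^n` -/
def t2fst {r1 r2 : ℝ} {n : ℕ} (p : T2R r1 r2 n) : Circ r1 :=
  (WithLp.equiv 2 (Circ r1 × S1R r2 n) p).1

/-- second circle coordinate of a point of `T² × ℝ^n` -/
def t2snd {r1 r2 : ℝ} {n : ℕ} (p : T2R r1 r2 n) : Circ r2 :=
  (WithLp.equiv 2 (Circ r2 × EucSp n) ((WithLp.equiv 2 (Circ r1 × S1R r2 n) p).2)).1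

/-- Euclidean coordinate of a point of `T² × ℝ^n` -/
def t2euc {r1 r2 : ℝ} {n : ℕ} (p : T2R r1 r2 n) : EucSp n :=
  (WithLp.equiv 2 (Circ r2 × EucSp n) ((WithLp.equiv 2 (Circ r1 × S1R r2 n) p).2)).2

/-- `ω_n`, the `n`-dimensional volume of the unit round sphere `Sⁿ ⊂ ℝ^{n+1}`. -/
noncomputable def omegaS (n : ℕ) : ℝ :=
  (haus (EucSp (n+1)) n (Metric.sphere (0 : EucSp (n+1)) 1)).toReal

/-- `β_n(r) = n^{(n-1)(n+1)} (2πr ω_{n-1})^{n+1} (1+n)^{-n²} ω_n^{-n}`. -/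
noncomputable def betaC (n : ℕ) (r : ℝ) : ℝ :=
  (n : ℝ) ^ ((n-1)*(n+1)) * (2 * Real.pi * r * omegaS (n-1)) ^ (n+1) *
    ((1 + (n : ℝ)) ^ (n^2))⁻¹ * ((omegaS n) ^ n)⁻¹

/-- The isoperimetric profile of `ℝ^m`: `I_{ℝ^m}(v) = m^{(m-1)/m} ω_{m-1}^{1/m} v^{(m-1)/m}`. -/
noncomputable def eucProfile (m : ℕ) (v : ℝ) : ℝ :=
  (m : ℝ) ^ (((m : ℝ) - 1)/m) * omegaS (m-1) ^ ((1 : ℝ)/m) * v ^ (((m : ℝ) - 1)/m)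

/-- The region `S¹_{r1} × S¹_{r2} × B^n_R` in `T² × ℝ^n`. -/
def tball (r1 r2 : ℝ) (n : ℕ) (R : ℝ) : Set (T2R r1 r2 n) :=
  {p | ‖t2euc p‖ ≤ R}

/-- `f_n(v) = V^{n+1}(∂(S¹_{r1} × S¹_{r2} × B^n_R))`, where `R > 0` is such that
`V^{n+2}(S¹_{r1} × S¹_{r2} × B^n_R) = v`. -/
noncomputable def fA (r1 r2 : ℝ) (n : ℕ) (v : ℝ≥0∞) : ℝ≥0∞ :=
  ⨅ (R : ℝ) (_ : 0 < R ∧ haus (T2R r1 r2 n) (n+2) (tball r1 r2 n R) = v),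
    haus (T2R r1 r2 n) (n+1) (frontier (tball r1 r2 n R))

/-- The slice function `F₁(t) = V^{n+1}(Ω ∩ ({t} × S¹_{r2} × ℝ^n))`. -/
noncomputable def sliceF1 {r1 r2 : ℝ} {n : ℕ} (Ω : Set (T2R r1 r2 n)) (t : Circ r1) : ℝ≥0∞ :=
  haus (T2R r1 r2 n) (n+1) (Ω ∩ {p | t2fst p = t})

/-- The slice function `F₂(s) = V^{n+1}(Ω ∩ (S¹_{r1} × {s} × ℝ^n))`. -/
noncomputable def sliceF2 {r1 r2 : ℝ} {n : ℕ} (Ω : Set (T2R r1 r2 n)) (s : Circ r2) : ℝ≥0∞ :=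
  haus (T2R r1 r2 n) (n+1) (Ω ∩ {p | t2snd p = s})

/-- `θ_m`, the minimum (infimum) of the slice function `F₁`. -/
noncomputable def thetaMin {r1 r2 : ℝ} {n : ℕ} (Ω : Set (T2R r1 r2 n)) : ℝ≥0∞ :=
  ⨅ t : Circ r1, sliceF1 Ω t

/-- `θ_M`, the maximum (supremum) of the slice function `F₁`. -/
noncomputable def thetaMax {r1 r2 : ℝ} {n : ℕ} (Ω : Set (T2R r1 r2 n)) : ℝ≥0∞ :=
  ⨆ t : Circ r1, sliceF1 Ω t

/-- `σ_m`, the minimum (infimum) of the slice function `F₂`. -/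
noncomputable def sigmaMin {r1 r2 : ℝ} {n : ℕ} (Ω : Set (T2R r1 r2 n)) : ℝ≥0∞ :=
  ⨅ s : Circ r2, sliceF2 Ω s

/-- `σ_M`, the maximum (supremum) of the slice function `F₂`. -/
noncomputable def sigmaMax {r1 r2 : ℝ} {n : ℕ} (Ω : Set (T2R r1 r2 n)) : ℝ≥0∞ :=
  ⨆ s : Circ r2, sliceF2 Ω s

/-- The region `S¹_r × B^m_R` in `S¹_r × ℝ^m`. -/
def s1ball (r : ℝ) (m : ℕ) (R : ℝ) : Set (S1R r m) :=
  {p | ‖(WithLp.equiv 2 (Circ r × EucSp m) p).2‖ ≤ R}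
/-- The Riemannian product `S¹_{r1} × S¹_{r2} × S¹_{r3} × ℝ^n = T³ × ℝ^n`. -/
abbrev T3R (r1 r2 r3 : ℝ) (n : ℕ) : Type :=
  WithLp 2 (Circ r1 × WithLp 2 (Circ r2 × S1R r3 n))

/-- third circle coordinate of a point of `T³ × ℝ^n` -/
def t3trd {r1 r2 r3 : ℝ} {n : ℕ} (p : T3R r1 r2 r3 n) : Circ r3 :=
  (WithLp.equiv 2 (Circ r3 × EucSp n)
    ((WithLp.equiv 2 (Circ r2 × S1R r3 n)
      ((WithLp.equiv 2 (Circ r1 × WithLp 2 (Circ r2 × S1R r3 n)) p).2)).2)).1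

/-- Euclidean coordinate of a point of `T³ × ℝ^n` -/
def t3euc {r1 r2 r3 : ℝ} {n : ℕ} (p : T3R r1 r2 r3 n) : EucSp n :=
  (WithLp.equiv 2 (Circ r3 × EucSp n)
    ((WithLp.equiv 2 (Circ r2 × S1R r3 n)
      ((WithLp.equiv 2 (Circ r1 × WithLp 2 (Circ r2 × S1R r3 n)) p).2)).2)).2

/-- The region `T³ × B^n_R` in `T³ × ℝ^n`. -/
def t3ball (r1 r2 r3 : ℝ) (n : ℕ) (R : ℝ) : Set (T3R r1 r2 r3 n) :=
  {p | ‖t3euc p‖ ≤ R}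

/-- `g_n(v) = V^{n+2}(∂(T³ × B^n_R))`, where `R > 0` is such that
`V^{n+3}(T³ × B^n_R) = v`. -/
noncomputable def gA (r1 r2 r3 : ℝ) (n : ℕ) (v : ℝ≥0∞) : ℝ≥0∞ :=
  ⨅ (R : ℝ) (_ : 0 < R ∧ haus (T3R r1 r2 r3 n) (n+3) (t3ball r1 r2 r3 n R) = v),
    haus (T3R r1 r2 r3 n) (n+2) (frontier (t3ball r1 r2 r3 n R))

/-- The slice function `F(t) = V^{n+2}(Ω ∩ (S¹_{r1} × S¹_{r2} × {t} × ℝ^n))`. -/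
noncomputable def sliceF3 {r1 r2 r3 : ℝ} {n : ℕ} (Ω : Set (T3R r1 r2 r3 n))
    (t : Circ r3) : ℝ≥0∞ :=
  haus (T3R r1 r2 r3 n) (n+2) (Ω ∩ {p | t3trd p = t})

/-- `η_m`, the minimum (infimum) of the slice function `F`. -/
noncomputable def etaMin {r1 r2 r3 : ℝ} {n : ℕ} (Ω : Set (T3R r1 r2 r3 n)) : ℝ≥0∞ :=
  ⨅ t : Circ r3, sliceF3 Ω t

/-- `η_M`, the maximum (supremum) of the slice function `F`. -/
noncomputable def etaMax {r1 r2 r3 : ℝ} {n : ℕ} (Ω : Set (T3R r1 r2 r3 n)) : ℝ≥0∞ :=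
  ⨆ t : Circ r3, sliceF3 Ω t

/-!
Since `η_m = 0`, `Ω` has slices `{t₃ = t}` of arbitrarily small `(n+2)`-measure `F(t)`.
Cut `T³ × ℝⁿ` open along such a slice and unroll the third circle into a line: `Ω` becomes a
closed region of `T² × ℝ^{n+1}` inside a strip of width `2πr₃`. The unrolling map is an
isometry on half-strips, so the new region has the volume of `Ω` (the slice and `∂Ω`, having
finite `(n+2)`-measure, are `(n+3)`-null), and its boundary lies over `∂Ω` plus two copies of the
slice, so its perimeter is at most `V(∂Ω) + 3F(t)`. Let `F(t) → 0`.
-/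

open Set

def DistPreservingOn {X Y : Type*} [PseudoMetricSpace X] [PseudoMetricSpace Y] (f : X → Y)
    (s : Set X) : Prop :=
  ∀ x ∈ s, ∀ y ∈ s, dist (f x) (f y) = dist x y

section Hausdorff

variable {X Y : Type*}

lemma haus_mono [EMetricSpace X] (d : ℕ) {s t : Set X} (h : s ⊆ t) :
    haus X d s ≤ haus X d t := by
  borelize X
  exact measure_mono h

lemma haus_union_le [EMetricSpace X] (d : ℕ) (s t : Set X) :
    haus X d (s ∪ t) ≤ haus X d s + haus X d t := by
  borelize X
  exact measure_union_le s t

lemma haus_succ_eq_zero [EMetricSpace X] {d : ℕ} {s : Set X} (h : haus X d s ≠ ⊤) :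
    haus X (d + 1) s = 0 := by
  borelize X
  exact (Measure.hausdorffMeasure_zero_or_top (by push_cast; linarith) s).resolve_right h

lemma haus_inter_add_sdiff_preimage [EMetricSpace X] {Z : Type*} [TopologicalSpace Z]
    [MeasurableSpace Z] [BorelSpace Z] {f : X → Z} (hf : Continuous f) {B : Set Z}
    (hB : MeasurableSet B) (d : ℕ) (s : Set X) :
    haus X d (s ∩ f ⁻¹' B) + haus X d (s \ f ⁻¹' B) = haus X d s := by
  borelize X
  exact measure_inter_add_sdiff s (hf.measurable hB)

lemma haus_image_of_distPreservingOn [MetricSpace X] [MetricSpace Y] {f : X → Y} {s : Set X}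
    (hf : DistPreservingOn f s) (d : ℕ) : haus Y d (f '' s) = haus X d s := by
  borelize X Y
  have hiso : Isometry (s.domRestrict f) := Isometry.of_dist_eq fun x y => hf x x.2 y y.2
  calc haus Y d (f '' s) = μH[d] (s.domRestrict f '' univ) := by
        rw [image_univ, range_domRestrict]; rfl
    _ = μH[d] (univ : Set s) := hiso.hausdorffMeasure_image (Or.inl d.cast_nonneg) _
    _ = haus X d s := by
      rw [← isometry_subtype_coe.hausdorffMeasure_image (Or.inl d.cast_nonneg), image_univ,
        Subtype.range_coe]
      rfl

end Hausdorff

section Cut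

variable {X Y : Type*} [TopologicalSpace X] [TopologicalSpace Y] {f : Y → X} {g : Y → ℝ}
  {Ω : Set X} {a b : ℝ}

lemma closure_cut_subset (hf : Continuous f) (hg : Continuous g) (hΩ : IsClosed Ω) :
    closure (f ⁻¹' interior Ω ∩ g ⁻¹' Ioo a b) ⊆ f ⁻¹' Ω ∩ g ⁻¹' Icc a b :=
  closure_minimal (inter_subset_inter (preimage_mono interior_subset)
    (preimage_mono Ioo_subset_Icc_self)) ((hΩ.preimage hf).inter (isClosed_Icc.preimage hg))

lemma frontier_closure_cut_subset (hf : Continuous f) (hg : Continuous g) (hΩ : IsClosed Ω) :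
    frontier (closure (f ⁻¹' interior Ω ∩ g ⁻¹' Ioo a b)) ⊆
      f ⁻¹' frontier Ω ∩ g ⁻¹' Icc a b ∪ f ⁻¹' Ω ∩ g ⁻¹' {a, b} := by
  intro y hy
  rw [isClosed_closure.frontier_eq] at hy
  obtain ⟨hyΩ, hya, hyb⟩ := closure_cut_subset hf hg hΩ hy.1
  by_cases hyint : f y ∈ interior Ω
  · refine Or.inr ⟨hyΩ, ?_⟩
    by_contra hend
    simp only [mem_preimage, mem_insert_iff, mem_singleton_iff, not_or] at hend
    have hopen : IsOpen (f ⁻¹' interior Ω ∩ g ⁻¹' Ioo a b) :=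
      (isOpen_interior.preimage hf).inter (isOpen_Ioo.preimage hg)
    exact hy.2 (interior_maximal subset_closure hopen
      ⟨hyint, lt_of_le_of_ne hya (Ne.symm hend.1), lt_of_le_of_ne hyb hend.2⟩)
  · exact Or.inl ⟨by rw [mem_preimage, hΩ.frontier_eq]; exact ⟨hyΩ, hyint⟩, hya, hyb⟩

end Cut

section AddCircle

variable {p : ℝ}

lemma AddCircle.dist_coe_coe_of_abs_sub_le {x y : ℝ} (h : |x - y| ≤ |p| / 2) :
    dist (x : AddCircle p) y = dist x y := by
  rcases eq_or_ne p 0 with rfl | hp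
  · obtain rfl : x = y := by simpa [sub_eq_zero] using h
    simp
  rw [dist_eq_norm, ← QuotientAddGroup.mk_sub, Real.dist_eq,
    (AddCircle.norm_coe_eq_abs_iff p hp).mpr h]

lemma AddCircle.injOn_coe_Ico (hp : 0 < p) (a : ℝ) :
    InjOn ((↑) : ℝ → AddCircle p) (Ico a (a + p)) :=
  have : Fact (0 < p) := ⟨hp⟩
  fun _ hx _ hy h => (AddCircle.coe_eq_coe_iff_of_mem_Ico hx hy).1 h

lemma AddCircle.compl_image_coe_Ico (hp : 0 < p) {a b : ℝ} (hab : a ≤ b) (hb : b ≤ a + p) :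
    (((↑) : ℝ → AddCircle p) '' Ico a b)ᶜ = (↑) '' Ico b (a + p) := by
  have : Fact (0 < p) := ⟨hp⟩
  refine (IsCompl.of_eq ?_ ?_).compl_eq
  · exact (Ico_disjoint_Ico_same.image (AddCircle.injOn_coe_Ico hp a)
      (Ico_subset_Ico_right hb) (Ico_subset_Ico_left hab)).eq_bot
  · show _ ∪ _ = univ
    rw [← image_union, Ico_union_Ico_eq_Ico hab hb, AddCircle.coe_image_Ico_eq]

lemma AddCircle.measurableSet_image_coe_Ico (hp : 0 < p) {a b : ℝ} (hb : b ≤ a + p) :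
    MeasurableSet (((↑) : ℝ → AddCircle p) '' Ico a b) :=
  measurableSet_Ico.image_of_continuousOn_injOn (AddCircle.continuous_mk' p).continuousOn
    ((AddCircle.injOn_coe_Ico hp a).mono (Ico_subset_Ico_right hb))

end AddCircle

section LpProd

variable {A B C : Type*} {g : B → C}

lemma image_withLpMap_prodMap_id (q : ℝ≥0∞) (S : Set B) :
    WithLp.map q (Prod.map (id : A → A) g) '' {x | x.snd ∈ S} = {z | z.snd ∈ g '' S} := by
  ext z
  constructor
  · rintro ⟨x, hx, rfl⟩
    exact ⟨x.snd, hx, rfl⟩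
  · rintro ⟨b, hb, hbz⟩
    refine ⟨WithLp.toLp q (z.fst, b), hb, ?_⟩
    show WithLp.toLp q (z.fst, g b) = z
    rw [hbz]
    rfl

lemma continuous_withLpMap_prodMap_id (q : ℝ≥0∞) [TopologicalSpace A] [TopologicalSpace B]
    [TopologicalSpace C] (hg : Continuous g) :
    Continuous (WithLp.map q (Prod.map (id : A → A) g)) :=
  (WithLp.prod_continuous_toLp q _ _).comp
    ((continuous_id.prodMap hg).comp (WithLp.prod_continuous_ofLp q _ _))

lemma distPreservingOn_withLpMap_prodMap_id [PseudoMetricSpace A] [PseudoMetricSpace B]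
    [PseudoMetricSpace C] {S : Set B} (hg : DistPreservingOn g S) :
    DistPreservingOn (WithLp.map 2 (Prod.map (id : A → A) g)) {x | x.snd ∈ S} := by
  intro x hx y hy
  rw [WithLp.prod_dist_eq_add (by norm_num), WithLp.prod_dist_eq_add (by norm_num)]
  change (dist x.fst y.fst ^ _ + dist (g x.snd) (g y.snd) ^ _) ^ _ = _
  rw [hg _ hx _ hy]

end LpProd

section Unroll

variable {p : ℝ} {n : ℕ}

def unroll (p : ℝ) (n : ℕ) (x : EucSp (n+1)) : WithLp 2 (AddCircle p × EucSp n) :=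
  WithLp.toLp 2 ((x 0 : AddCircle p), WithLp.toLp 2 (Fin.tail x.ofLp))

lemma continuous_unroll : Continuous (unroll p n) := by
  unfold unroll
  fun_prop

lemma image_unroll (I : Set ℝ) :
    unroll p n '' {x | x 0 ∈ I} = {w | w.fst ∈ ((↑) : ℝ → AddCircle p) '' I} := by
  ext w
  constructor
  · rintro ⟨x, hx, rfl⟩
    exact ⟨x 0, hx, rfl⟩
  · rintro ⟨c, hc, hcw⟩
    refine ⟨WithLp.toLp 2 (Fin.cons c w.snd.ofLp), hc, ?_⟩
    show WithLp.toLp 2 ((c : AddCircle p), WithLp.toLp 2 w.snd.ofLp) = w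
    rw [hcw]
    rfl

lemma distPreservingOn_unroll {I : Set ℝ} (hI : ∀ a ∈ I, ∀ b ∈ I, |a - b| ≤ |p| / 2) :
    DistPreservingOn (unroll p n) {x | x 0 ∈ I} := by
  intro x hx y hy
  have hcirc : dist (x 0 : AddCircle p) (y 0) = dist (x 0) (y 0) :=
    AddCircle.dist_coe_coe_of_abs_sub_le (hI _ hx _ hy)
  calc dist (unroll p n x) (unroll p n y)
      = √(dist (x 0 : AddCircle p) (y 0) ^ 2 +
          dist (WithLp.toLp 2 (Fin.tail x.ofLp)) (WithLp.toLp 2 (Fin.tail y.ofLp)) ^ 2) :=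
        WithLp.prod_dist_eq_of_L2 _ _
    _ = √(dist (x 0) (y 0) ^ 2 + ∑ i : Fin n, dist (x i.succ) (y i.succ) ^ 2) := by
        rw [hcirc, EuclideanSpace.dist_eq, Real.sq_sqrt (by positivity)]
        rfl
    _ = dist x y := by rw [EuclideanSpace.dist_eq, Fin.sum_univ_succ]

end Unroll


section Torus

variable {r1 r2 r3 : ℝ} {n : ℕ}

/-- The covering map `T² × ℝ^{n+1} → T³ × ℝⁿ` wrapping the first Euclidean coordinate
around `S¹_{r3}`. -/
def t3Cover (r1 r2 r3 : ℝ) (n : ℕ) : T2R r1 r2 (n+1) → T3R r1 r2 r3 n :=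
  WithLp.map 2 (Prod.map id (WithLp.map 2 (Prod.map id (unroll (2 * π * r3) n))))

def t3CoverCoord (u : T2R r1 r2 (n+1)) : ℝ := t2euc u 0

lemma t3trd_t3Cover (u : T2R r1 r2 (n+1)) :
    t3trd (t3Cover r1 r2 r3 n u) = (t3CoverCoord u : Circ r3) := rfl

lemma continuous_t3Cover : Continuous (t3Cover r1 r2 r3 n) :=
  continuous_withLpMap_prodMap_id 2 (continuous_withLpMap_prodMap_id 2 continuous_unroll)

lemma continuous_t3CoverCoord : Continuous (t3CoverCoord : T2R r1 r2 (n+1) → ℝ) := by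
  unfold t3CoverCoord t2euc
  fun_prop

lemma continuous_t3trd : Continuous (t3trd : T3R r1 r2 r3 n → Circ r3) := by
  unfold t3trd
  fun_prop

lemma image_t3Cover_preimage_t3CoverCoord (I : Set ℝ) :
    t3Cover r1 r2 r3 n '' (t3CoverCoord ⁻¹' I) = t3trd ⁻¹' ((↑) '' I) := by
  change WithLp.map 2 (Prod.map id _) '' {u : T2R r1 r2 (n+1) |
    u.snd ∈ {v : S1R r2 (n+1) | v.snd ∈ {x : EucSp (n+1) | x 0 ∈ I}}} = _
  rw [image_withLpMap_prodMap_id, image_withLpMap_prodMap_id, image_unroll]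
  rfl

lemma haus_t3Cover_preimage_inter_strip {I : Set ℝ}
    (hI : ∀ a ∈ I, ∀ b ∈ I, |a - b| ≤ |2 * π * r3| / 2) (d : ℕ)
    (A : Set (T3R r1 r2 r3 n)) :
    haus (T2R r1 r2 (n+1)) d (t3Cover r1 r2 r3 n ⁻¹' A ∩ t3CoverCoord ⁻¹' I) =
      haus (T3R r1 r2 r3 n) d (A ∩ t3trd ⁻¹' ((↑) '' I)) := by
  have hiso : DistPreservingOn (t3Cover r1 r2 r3 n) (t3CoverCoord ⁻¹' I) :=
    distPreservingOn_withLpMap_prodMap_id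
      (distPreservingOn_withLpMap_prodMap_id (distPreservingOn_unroll hI))
  rw [← image_t3Cover_preimage_t3CoverCoord, ← image_preimage_inter,
    haus_image_of_distPreservingOn (fun x hx y hy => hiso x hx.2 y hy.2)]

lemma haus_t3Cover_preimage_inter_wall (d : ℕ) (A : Set (T3R r1 r2 r3 n)) (c : ℝ) :
    haus (T2R r1 r2 (n+1)) d (t3Cover r1 r2 r3 n ⁻¹' A ∩ t3CoverCoord ⁻¹' {c}) =
      haus (T3R r1 r2 r3 n) d (A ∩ {z | t3trd z = c}) := by
  rw [haus_t3Cover_preimage_inter_strip (by rintro a rfl b rfl; rw [sub_self, abs_zero]; positivity), image_singleton]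
  rfl

lemma haus_t3Cover_preimage_inter_Ico (hr : 0 < r3) (d : ℕ) (A : Set (T3R r1 r2 r3 n)) (a : ℝ) :
    haus (T2R r1 r2 (n+1)) d
        (t3Cover r1 r2 r3 n ⁻¹' A ∩ t3CoverCoord ⁻¹' Ico a (a + 2 * π * r3)) =
      haus (T3R r1 r2 r3 n) d A := by
  set p := 2 * π * r3
  have hp : 0 < p := by positivity
  have hmid : a ≤ a + p / 2 := by linarith
  have hmid' : a + p / 2 ≤ a + p := by linarith
  have hhalf : ∀ {b c : ℝ}, c ≤ b + p / 2 →
      ∀ x ∈ Ico b c, ∀ y ∈ Ico b c, |x - y| ≤ |p| / 2 := by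
    intro b c hc x hx y hy
    rw [abs_of_pos hp, abs_sub_le_iff]
    constructor <;> linarith [hx.1, hx.2, hy.1, hy.2]
  have hfirst : Ico a (a + p) ∩ Ico a (a + p / 2) = Ico a (a + p / 2) :=
    inter_eq_right.2 (Ico_subset_Ico_right hmid')
  have hsecond : Ico a (a + p) \ Ico a (a + p / 2) = Ico (a + p / 2) (a + p) := by
    rw [← Ico_union_Ico_eq_Ico hmid hmid', union_sdiff_left,
      sdiff_eq_left.2 Ico_disjoint_Ico_same.symm]
  -- `t3Cover` is isometric only on half-strips, so split the strip in two
  rw [← haus_inter_add_sdiff_preimage continuous_t3CoverCoord measurableSet_Ico d _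
      (B := Ico a (a + p / 2)),
    inter_assoc, ← preimage_inter, hfirst, inter_sdiff_assoc, ← preimage_sdiff, hsecond,
    haus_t3Cover_preimage_inter_strip (hhalf le_rfl),
    haus_t3Cover_preimage_inter_strip (hhalf (by linarith)),
    ← haus_inter_add_sdiff_preimage continuous_t3trd
      (AddCircle.measurableSet_image_coe_Ico hp hmid') d A,
    sdiff_eq, ← preimage_compl, AddCircle.compl_image_coe_Ico hp hmid hmid']

lemma haus_t3Cover_preimage_inter_Icc_le (hr : 0 < r3) (d : ℕ) (A : Set (T3R r1 r2 r3 n))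
    (a : ℝ) :
    haus (T2R r1 r2 (n+1)) d
        (t3Cover r1 r2 r3 n ⁻¹' A ∩ t3CoverCoord ⁻¹' Icc a (a + 2 * π * r3)) ≤
      haus (T3R r1 r2 r3 n) d A + haus (T3R r1 r2 r3 n) d (A ∩ {z | t3trd z = a}) := by
  have ha : a ≤ a + 2 * π * r3 := by linarith [show 0 < 2 * π * r3 by positivity]
  rw [← Ico_insert_right ha, insert_eq, preimage_union, inter_union_distrib_left]
  refine (haus_union_le _ _ _).trans_eq ?_
  rw [add_comm, haus_t3Cover_preimage_inter_Ico hr, haus_t3Cover_preimage_inter_wall,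
    AddCircle.coe_add_period]

/-- `Ω` cut open along the slice `t₃ = a` and unrolled into a strip of `T² × ℝ^{n+1}`. -/
def t3CutOpen (Ω : Set (T3R r1 r2 r3 n)) (a : ℝ) : Set (T2R r1 r2 (n+1)) :=
  closure (t3Cover r1 r2 r3 n ⁻¹' interior Ω ∩ t3CoverCoord ⁻¹' Ioo a (a + 2 * π * r3))

lemma isClosedRegion_t3CutOpen (Ω : Set (T3R r1 r2 r3 n)) (a : ℝ) :
    IsClosedRegion (t3CutOpen Ω a) :=
  ⟨_, (isOpen_interior.preimage continuous_t3Cover).inter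
    (isOpen_Ioo.preimage continuous_t3CoverCoord), rfl⟩

lemma haus_t3CutOpen (hr : 0 < r3) {Ω : Set (T3R r1 r2 r3 n)} (hΩ : IsClosed Ω) {d : ℕ}
    (hfr : haus (T3R r1 r2 r3 n) d (frontier Ω) = 0) {a : ℝ}
    (hslice : haus (T3R r1 r2 r3 n) d (Ω ∩ {z | t3trd z = a}) = 0) :
    haus (T2R r1 r2 (n+1)) d (t3CutOpen Ω a) = haus (T3R r1 r2 r3 n) d Ω := by
  have ha : a < a + 2 * π * r3 := by linarith [show 0 < 2 * π * r3 by positivity]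
  refine le_antisymm ?_ ?_
  · calc haus _ d (t3CutOpen Ω a)
        ≤ haus _ d (t3Cover r1 r2 r3 n ⁻¹' Ω ∩
            t3CoverCoord ⁻¹' Icc a (a + 2 * π * r3)) :=
          haus_mono _ (closure_cut_subset continuous_t3Cover continuous_t3CoverCoord hΩ)
      _ ≤ haus _ d Ω := by
          simpa [hslice] using haus_t3Cover_preimage_inter_Icc_le hr d Ω a
  · calc haus _ d Ω
        ≤ haus _ d (interior Ω) + haus _ d (frontier Ω) := by
          refine (haus_mono _ fun z hz => ?_).trans (haus_union_le _ _ _)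
          by_cases hzi : z ∈ interior Ω
          · exact Or.inl hzi
          · exact Or.inr (hΩ.frontier_eq ▸ ⟨hz, hzi⟩)
      _ = haus _ d (t3Cover r1 r2 r3 n ⁻¹' interior Ω ∩
            t3CoverCoord ⁻¹' Ico a (a + 2 * π * r3)) := by
          rw [hfr, add_zero, haus_t3Cover_preimage_inter_Ico hr]
      _ ≤ haus _ d (t3Cover r1 r2 r3 n ⁻¹' interior Ω ∩
              t3CoverCoord ⁻¹' Ioo a (a + 2 * π * r3)) +
            haus _ d (t3Cover r1 r2 r3 n ⁻¹' interior Ω ∩ t3CoverCoord ⁻¹' {a}) := by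
          rw [← Ioo_insert_left ha, insert_eq, preimage_union, inter_union_distrib_left,
            union_comm]
          exact haus_union_le _ _ _
      _ ≤ haus _ d (t3CutOpen Ω a) + 0 := by
          gcongr
          · exact haus_mono _ subset_closure
          · rw [haus_t3Cover_preimage_inter_wall, ← hslice]
            exact haus_mono _ (inter_subset_inter_left _ interior_subset)
      _ = haus _ d (t3CutOpen Ω a) := add_zero _

lemma haus_frontier_t3CutOpen_le (hr : 0 < r3) {Ω : Set (T3R r1 r2 r3 n)} (hΩ : IsClosed Ω)
    (d : ℕ) (a : ℝ) :
    haus (T2R r1 r2 (n+1)) d (frontier (t3CutOpen Ω a)) ≤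
      haus (T3R r1 r2 r3 n) d (frontier Ω) +
        3 * haus (T3R r1 r2 r3 n) d (Ω ∩ {z | t3trd z = a}) := by
  set F := haus (T3R r1 r2 r3 n) d (Ω ∩ {z | t3trd z = a})
  have hwalls : t3Cover r1 r2 r3 n ⁻¹' Ω ∩ t3CoverCoord ⁻¹' {a, a + 2 * π * r3} ⊆
      t3Cover r1 r2 r3 n ⁻¹' (Ω ∩ {z | t3trd z = a}) ∩
        t3CoverCoord ⁻¹' Icc a (a + 2 * π * r3) := by
    rintro u ⟨hu, hend⟩
    have ha : a ≤ a + 2 * π * r3 := by linarith [show 0 < 2 * π * r3 by positivity]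
    simp only [mem_preimage, mem_insert_iff, mem_singleton_iff] at hend
    rcases hend with hend | hend
    · exact ⟨⟨hu, by rw [mem_ofPred_eq, t3trd_t3Cover, hend]⟩,
        by rw [mem_preimage, hend]; exact left_mem_Icc.2 ha⟩
    · exact ⟨⟨hu, by rw [mem_ofPred_eq, t3trd_t3Cover, hend, AddCircle.coe_add_period]⟩,
        by rw [mem_preimage, hend]; exact right_mem_Icc.2 ha⟩
  calc haus _ d (frontier (t3CutOpen Ω a))
      ≤ haus _ d (t3Cover r1 r2 r3 n ⁻¹' frontier Ω ∩
            t3CoverCoord ⁻¹' Icc a (a + 2 * π * r3)) +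
          haus _ d (t3Cover r1 r2 r3 n ⁻¹' (Ω ∩ {z | t3trd z = a}) ∩
            t3CoverCoord ⁻¹' Icc a (a + 2 * π * r3)) := by
        refine (haus_mono _ ?_).trans (haus_union_le _ _ _)
        exact (frontier_closure_cut_subset continuous_t3Cover continuous_t3CoverCoord hΩ).trans
          (union_subset_union_right _ hwalls)
    _ ≤ (haus _ d (frontier Ω) + F) + (F + F) := by
        gcongr
        · refine (haus_t3Cover_preimage_inter_Icc_le hr d _ a).trans ?_
          gcongr
          exact haus_mono _ (inter_subset_inter_left _ hΩ.frontier_subset)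
        · refine (haus_t3Cover_preimage_inter_Icc_le hr d _ a).trans ?_
          rw [inter_assoc, inter_self]
    _ = haus _ d (frontier Ω) + 3 * F := by ring

end Torus

theorem isoProfile_le_haus_frontier_add_slice {r1 r2 r3 : ℝ} {n : ℕ} (hr : 0 < r3) {m : ℕ}
    {Ω : Set (T3R r1 r2 r3 n)} (hΩ : IsClosedRegion Ω) (t : Circ r3) :
    isoProfile (T2R r1 r2 (n+1)) (m + 1) (haus (T3R r1 r2 r3 n) (m + 1) Ω) ≤
      haus (T3R r1 r2 r3 n) m (frontier Ω) +
        3 * haus (T3R r1 r2 r3 n) m (Ω ∩ {z | t3trd z = t}) := by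
  obtain ⟨a, rfl⟩ := QuotientAddGroup.mk_surjective t
  have hΩc : IsClosed Ω := by
    obtain ⟨V, -, rfl⟩ := hΩ
    exact isClosed_closure
  by_cases hfin : haus (T3R r1 r2 r3 n) m (frontier Ω) ≠ ⊤ ∧
      haus (T3R r1 r2 r3 n) m (Ω ∩ {z | t3trd z = a}) ≠ ⊤
  · calc isoProfile (T2R r1 r2 (n+1)) (m + 1) (haus (T3R r1 r2 r3 n) (m + 1) Ω)
        ≤ haus (T2R r1 r2 (n+1)) m (frontier (t3CutOpen Ω a)) :=
          iInf₂_le (t3CutOpen Ω a) ⟨isClosedRegion_t3CutOpen Ω a,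
            haus_t3CutOpen hr hΩc (haus_succ_eq_zero hfin.1) (haus_succ_eq_zero hfin.2)⟩
      _ ≤ _ := haus_frontier_t3CutOpen_le hr hΩc m a
  · rcases not_and_or.1 hfin with h | h <;> rw [not_not.1 h] <;> simp

theorem t3_slice_min_zero_general (r1 r2 r3 : ℝ) (hr1 : 0 < r1) (hr12 : r1 ≤ r2)
    (hr23 : r2 ≤ r3) (n : ℕ)
    (Ω : Set (T3R r1 r2 r3 n)) (hΩ : IsIsoRegion (T3R r1 r2 r3 n) (n+3) Ω)
    (h : etaMin Ω = 0) :
    isoProfile (T2R r1 r2 (n+1)) (n+3) (haus (T3R r1 r2 r3 n) (n+3) Ω)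
      ≤ haus (T3R r1 r2 r3 n) (n+2) (frontier Ω) := by
  have hr3 : 0 < r3 := hr1.trans_le (hr12.trans hr23)
  calc isoProfile (T2R r1 r2 (n+1)) (n+3) (haus (T3R r1 r2 r3 n) (n+3) Ω)
      ≤ ⨅ t, haus (T3R r1 r2 r3 n) (n+2) (frontier Ω) + 3 * sliceF3 Ω t :=
        le_iInf fun t => isoProfile_le_haus_frontier_add_slice hr3 hΩ.1 t
    _ = haus (T3R r1 r2 r3 n) (n+2) (frontier Ω) + 3 * etaMin Ω := by
        rw [etaMin, ENNReal.mul_iInf_of_ne (by norm_num) (by norm_num), ENNReal.add_iInf]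
    _ = haus (T3R r1 r2 r3 n) (n+2) (frontier Ω) := by rw [h, mul_zero, add_zero]

/-- Lemma 7 of the paper.
Let `0 < r1 ≤ r2 ≤ r3`, `2 ≤ n ≤ 4`, and let `Ω` be an isoperimetric region in
`T³ × ℝⁿ`.  If `η_m = 0`, then
`I_{S¹_{r1}×S¹_{r2}×ℝ^{n+1}}(V^{n+3}(Ω)) ≤ V^{n+2}(∂Ω)`. -/
theorem t3_slice_min_zero (r1 r2 r3 : ℝ) (hr1 : 0 < r1) (hr12 : r1 ≤ r2)
    (hr23 : r2 ≤ r3) (n : ℕ) (hn2 : 2 ≤ n) (hn4 : n ≤ 4)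
    (Ω : Set (T3R r1 r2 r3 n)) (hΩ : IsIsoRegion (T3R r1 r2 r3 n) (n+3) Ω)
    (h : etaMin Ω = 0) :
    isoProfile (T2R r1 r2 (n+1)) (n+3) (haus (T3R r1 r2 r3 n) (n+3) Ω)
      ≤ haus (T3R r1 r2 r3 n) (n+2) (frontier Ω) :=
  t3_slice_min_zero_general r1 r2 r3 hr1 hr12 hr23 n Ω hΩ h
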